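/- Let λ > 0 and let b_n > 0 solve √(π/2) b_n exp(b_n²/2) = n with a_n = 1/b_n. Then for every real x, F_λ^n(a_n x + b_n) → exp(-e^{-x}) as n → ∞. -/

import Mathlib

/-!
The tail `1 - F_λ(t) = ∫_t^∞ 2 φ(s) Φ(λ s) ds` lies between `2 Φ(λ t) (1 - Φ(t))` and
`2 (1 - Φ(t))`. Since `Φ(λ t) → 1` for `λ > 0`, and `1 - Φ(t) ~ φ(t) / t` by the Mills-ratio
bounds that come from `(-φ(s) / s)' = (1 + s⁻²) φ(s)`, the tail is asymptotic to `2 φ(t) / t`.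
The defining equation of `b_n` makes `n · 2 φ(u_n) / u_n → e^{-x}` at `u_n = x / b_n + b_n`, hence
`n (1 - F_λ(u_n)) → e^{-x}` and `F_λ(u_n)^n = (1 - (1 - F_λ(u_n)))^n → exp(-e^{-x})`.
-/

open Real MeasureTheory Filter

noncomputable def stdPhi (x : ℝ) : ℝ := (Real.sqrt (2 * Real.pi))⁻¹ * Real.exp (-x ^ 2 / 2)

noncomputable def stdCdf (x : ℝ) : ℝ := ∫ t in Set.Iic x, stdPhi t

noncomputable def snCdf (l x : ℝ) : ℝ := ∫ t in Set.Iic x, 2 * stdPhi t * stdCdf (l * t)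

open Set Asymptotics ProbabilityTheory Topology

lemma Asymptotics.isEquivalent_of_mul_le_of_le {α : Type*} {l : Filter α} {a u v : α → ℝ}
    (ha : Tendsto a l (𝓝 1)) (hv : ∀ᶠ t in l, 0 < v t) (hlow : ∀ᶠ t in l, a t * v t ≤ u t)
    (hup : ∀ᶠ t in l, u t ≤ v t) : u ~[l] v := by
  refine isEquivalent_of_tendsto_one
    (tendsto_of_tendsto_of_tendsto_of_le_of_le' ha tendsto_const_nhds ?_ ?_)
  · filter_upwards [hv, hlow] with t hvt h using (le_div_iff₀ hvt).2 h
  · filter_upwards [hv, hup] with t hvt h using (div_le_one hvt).2 h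

lemma stdPhi_eq_gaussianPDFReal : stdPhi = gaussianPDFReal 0 1 := by
  ext x; simp [stdPhi, gaussianPDFReal]

lemma stdPhi_pos (x : ℝ) : 0 < stdPhi x :=
  stdPhi_eq_gaussianPDFReal ▸ gaussianPDFReal_pos _ _ _ one_ne_zero

lemma stdPhi_neg (x : ℝ) : stdPhi (-x) = stdPhi x := by simp [stdPhi]

@[fun_prop]
lemma measurable_stdPhi : Measurable stdPhi :=
  stdPhi_eq_gaussianPDFReal ▸ measurable_gaussianPDFReal 0 1

lemma integrable_stdPhi : Integrable stdPhi :=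
  stdPhi_eq_gaussianPDFReal ▸ integrable_gaussianPDFReal 0 1

lemma integral_stdPhi : ∫ x, stdPhi x = 1 :=
  stdPhi_eq_gaussianPDFReal ▸ integral_gaussianPDFReal_eq_one 0 one_ne_zero

lemma hasDerivAt_stdPhi (x : ℝ) : HasDerivAt stdPhi (-x * stdPhi x) x := by
  have h : HasDerivAt (fun y : ℝ => -y ^ 2 / 2) (-x) x :=
    (((hasDerivAt_pow 2 x).fun_neg).div_const 2).congr_deriv (by ring)
  exact (h.exp.const_mul (√(2 * π))⁻¹).congr_deriv (by rw [stdPhi]; ring)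

lemma tendsto_stdPhi_atTop : Tendsto stdPhi atTop (𝓝 0) := by
  have h : Tendsto (fun x : ℝ => -x ^ 2 / 2) atTop atBot :=
    (tendsto_neg_atTop_atBot.comp (tendsto_pow_atTop two_ne_zero)).atBot_div_const two_pos
  have := (tendsto_exp_atBot.comp h).const_mul (√(2 * π))⁻¹
  rwa [mul_zero] at this

lemma stdCdf_eq_cdf : stdCdf = cdf (gaussianReal 0 1) := by
  ext x
  rw [cdf_eq_real, measureReal_def, gaussianReal_apply_eq_integral 0 one_ne_zero,
    ENNReal.toReal_ofReal (setIntegral_nonneg measurableSet_Iic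
      fun t _ => gaussianPDFReal_nonneg 0 1 t), stdCdf, stdPhi_eq_gaussianPDFReal]

lemma stdCdf_add_integral_Ioi (x : ℝ) : stdCdf x + ∫ t in Ioi x, stdPhi t = 1 := by
  rw [stdCdf, ← compl_Iic, integral_add_compl measurableSet_Iic integrable_stdPhi,
    integral_stdPhi]

lemma stdCdf_neg (x : ℝ) : stdCdf (-x) = ∫ t in Ioi x, stdPhi t := by
  rw [stdCdf, ← integral_comp_neg_Ioi]
  simp only [stdPhi_neg]

lemma stdCdf_add_stdCdf_neg (x : ℝ) : stdCdf x + stdCdf (-x) = 1 := by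
  rw [stdCdf_neg, stdCdf_add_integral_Ioi]

lemma stdCdf_nonneg (x : ℝ) : 0 ≤ stdCdf x := stdCdf_eq_cdf ▸ cdf_nonneg _ x

lemma stdCdf_le_one (x : ℝ) : stdCdf x ≤ 1 := stdCdf_eq_cdf ▸ cdf_le_one _ x

lemma monotone_stdCdf : Monotone stdCdf := stdCdf_eq_cdf ▸ monotone_cdf _

lemma tendsto_stdCdf_atTop : Tendsto stdCdf atTop (𝓝 1) := stdCdf_eq_cdf ▸ tendsto_cdf_atTop _

lemma integrableOn_one_add_inv_sq_mul_stdPhi {t : ℝ} (ht : 0 < t) :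
    IntegrableOn (fun s => (1 + (s ^ 2)⁻¹) * stdPhi s) (Ioi t) := by
  refine (integrable_stdPhi.integrableOn.const_mul (1 + (t ^ 2)⁻¹)).mono'
    (by fun_prop) ?_
  filter_upwards [ae_restrict_mem measurableSet_Ioi] with s hs
  have hts : t ≤ s := le_of_lt hs
  rw [norm_of_nonneg (by have := stdPhi_pos s; positivity)]
  gcongr
  exact (stdPhi_pos s).le

lemma integral_Ioi_one_add_inv_sq_mul_stdPhi {t : ℝ} (ht : 0 < t) :
    ∫ s in Ioi t, (1 + (s ^ 2)⁻¹) * stdPhi s = stdPhi t / t := by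
  have hderiv : ∀ s ∈ Ici t, HasDerivAt (fun s => -(stdPhi s / s)) ((1 + (s ^ 2)⁻¹) * stdPhi s) s :=
    fun s hs => by
      have hs0 : s ≠ 0 := (ht.trans_le hs).ne'
      exact ((hasDerivAt_stdPhi s).div (hasDerivAt_id' s) hs0).neg.congr_deriv
        (by field_simp; ring)
  have hlim : Tendsto (fun s => -(stdPhi s / s)) atTop (𝓝 0) := by
    simpa using (tendsto_stdPhi_atTop.div_atTop tendsto_id).neg
  rw [integral_Ioi_of_hasDerivAt_of_tendsto' hderiv
    (integrableOn_one_add_inv_sq_mul_stdPhi ht) hlim]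
  ring

lemma integral_Ioi_stdPhi_le {t : ℝ} (ht : 0 < t) :
    ∫ s in Ioi t, stdPhi s ≤ stdPhi t / t := by
  rw [← integral_Ioi_one_add_inv_sq_mul_stdPhi ht]
  refine setIntegral_mono_on integrable_stdPhi.integrableOn
    (integrableOn_one_add_inv_sq_mul_stdPhi ht) measurableSet_Ioi fun s _ => ?_
  exact le_mul_of_one_le_left (stdPhi_pos s).le (le_add_of_nonneg_right (by positivity))

lemma stdPhi_div_le {t : ℝ} (ht : 0 < t) :
    stdPhi t / t ≤ (1 + (t ^ 2)⁻¹) * ∫ s in Ioi t, stdPhi s := by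
  rw [← integral_Ioi_one_add_inv_sq_mul_stdPhi ht, ← integral_const_mul]
  refine setIntegral_mono_on (integrableOn_one_add_inv_sq_mul_stdPhi ht)
    (integrable_stdPhi.integrableOn.const_mul _) measurableSet_Ioi fun s hs => ?_
  have hts : t ≤ s := le_of_lt hs
  gcongr
  exact (stdPhi_pos s).le

lemma isEquivalent_integral_Ioi_stdPhi :
    (fun t => ∫ s in Ioi t, stdPhi s) ~[atTop] fun t => stdPhi t / t := by
  have ha : Tendsto (fun t : ℝ => (1 + (t ^ 2)⁻¹)⁻¹) atTop (𝓝 1) := by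
    simpa using ((tendsto_inv_atTop_zero.comp (tendsto_pow_atTop two_ne_zero)).const_add
      (1 : ℝ)).inv₀ (by norm_num)
  refine isEquivalent_of_mul_le_of_le ha ?_ ?_ ?_ <;>
    filter_upwards [eventually_gt_atTop 0] with t ht
  · exact div_pos (stdPhi_pos t) ht
  · exact (inv_mul_le_iff₀ (by positivity)).2 (stdPhi_div_le ht)
  · exact integral_Ioi_stdPhi_le ht

noncomputable def snPdf (l t : ℝ) : ℝ := 2 * stdPhi t * stdCdf (l * t)

noncomputable def snTail (l x : ℝ) : ℝ := ∫ t in Ioi x, snPdf l t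

lemma snPdf_nonneg (l t : ℝ) : 0 ≤ snPdf l t :=
  mul_nonneg (mul_nonneg zero_le_two (stdPhi_pos t).le) (stdCdf_nonneg _)

lemma snPdf_le (l t : ℝ) : snPdf l t ≤ 2 * stdPhi t :=
  mul_le_of_le_one_right (mul_nonneg zero_le_two (stdPhi_pos t).le) (stdCdf_le_one _)

lemma integrable_snPdf (l : ℝ) : Integrable (snPdf l) := by
  have hmeas : Measurable (snPdf l) :=
    (measurable_stdPhi.const_mul 2).mul (monotone_stdCdf.measurable.comp (measurable_const_mul l))
  refine (integrable_stdPhi.const_mul 2).mono' hmeas.aestronglyMeasurable (ae_of_all _ fun t => ?_)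
  rw [norm_of_nonneg (snPdf_nonneg l t)]
  exact snPdf_le l t

lemma integral_snPdf (l : ℝ) : ∫ t, snPdf l t = 1 := by
  have hsym : ∀ t, snPdf l t + snPdf l (-t) = 2 * stdPhi t := fun t => by
    simp only [snPdf, stdPhi_neg, mul_neg]
    linear_combination (2 * stdPhi t) * stdCdf_add_stdCdf_neg (l * t)
  have h := integral_add (integrable_snPdf l) (integrable_snPdf l).comp_neg
  simp only [hsym, integral_neg_eq_self, integral_const_mul, integral_stdPhi] at h
  linarith

lemma snCdf_eq_one_sub_snTail (l x : ℝ) : snCdf l x = 1 - snTail l x := by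
  rw [← integral_snPdf l, ← integral_add_compl measurableSet_Iic (integrable_snPdf l), compl_Iic]
  exact (add_sub_cancel_right _ _).symm

lemma snTail_le (l t : ℝ) : snTail l t ≤ 2 * ∫ s in Ioi t, stdPhi s := by
  rw [← integral_const_mul]
  exact setIntegral_mono_on (integrable_snPdf l).integrableOn
    (integrable_stdPhi.const_mul 2).integrableOn measurableSet_Ioi fun s _ => snPdf_le l s

lemma le_snTail {l : ℝ} (hl : 0 ≤ l) (t : ℝ) :
    stdCdf (l * t) * (2 * ∫ s in Ioi t, stdPhi s) ≤ snTail l t := by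
  rw [← integral_const_mul, ← integral_const_mul]
  refine setIntegral_mono_on ((integrable_stdPhi.const_mul _).const_mul _).integrableOn
    (integrable_snPdf l).integrableOn measurableSet_Ioi fun s hs => ?_
  have hΦ : stdCdf (l * t) ≤ stdCdf (l * s) := monotone_stdCdf (by gcongr; exact le_of_lt hs)
  have := stdPhi_pos s
  rw [snPdf]
  nlinarith

lemma isEquivalent_snTail {l : ℝ} (hl : 0 < l) :
    snTail l ~[atTop] fun t => 2 * (stdPhi t / t) := by
  have hΦ : Tendsto (fun t => stdCdf (l * t)) atTop (𝓝 1) :=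
    tendsto_stdCdf_atTop.comp (tendsto_id.const_mul_atTop hl)
  have hsqueeze : snTail l ~[atTop] fun t => 2 * ∫ s in Ioi t, stdPhi s := by
    refine isEquivalent_of_mul_le_of_le hΦ ?_ ?_ (.of_forall (snTail_le l))
    · filter_upwards [eventually_gt_atTop 0] with t ht
      have := (div_pos (stdPhi_pos t) ht).trans_le (stdPhi_div_le ht)
      have : 0 < ∫ s in Ioi t, stdPhi s := pos_of_mul_pos_right this (by positivity)
      positivity
    · exact .of_forall (le_snTail hl.le)
  exact hsqueeze.trans (IsEquivalent.refl.mul isEquivalent_integral_Ioi_stdPhi)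

lemma tendsto_atTop_of_sqrt_mul_exp_eq {b : ℕ → ℝ}
    (hb : ∀ n : ℕ, 1 ≤ n → 0 < b n ∧ √(π / 2) * b n * exp (b n ^ 2 / 2) = n) :
    Tendsto b atTop atTop := by
  rw [tendsto_atTop_atTop]
  intro M
  set M₀ := max M 0
  obtain ⟨N, hN⟩ := exists_nat_gt (√(π / 2) * M₀ * exp (M₀ ^ 2 / 2))
  refine ⟨N + 1, fun n hNn => ?_⟩
  obtain ⟨hpos, heq⟩ := hb n (by omega)
  by_contra! hlt
  have hbM : b n ≤ M₀ := hlt.le.trans (le_max_left _ _)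
  have hn : (n : ℝ) ≤ √(π / 2) * M₀ * exp (M₀ ^ 2 / 2) := by
    rw [← heq]
    gcongr
  have : (N : ℝ) + 1 ≤ n := by exact_mod_cast hNn
  linarith

/-- The right side is continuous in `b⁻¹` at `0`, where it equals `exp (-x)`. -/
lemma sqrt_mul_exp_mul_two_mul_stdPhi_div {b : ℝ} (hb : b ≠ 0) (x : ℝ) :
    √(π / 2) * b * exp (b ^ 2 / 2) * (2 * (stdPhi (b⁻¹ * x + b) / (b⁻¹ * x + b))) =
      exp (-x - x ^ 2 * b⁻¹ ^ 2 / 2) / (1 + x * b⁻¹ ^ 2) := by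
  have hu : b⁻¹ * x + b = b * (1 + x * b⁻¹ ^ 2) := by field_simp; ring
  have hexp : exp (b ^ 2 / 2) * exp (-(b⁻¹ * x + b) ^ 2 / 2) = exp (-x - x ^ 2 * b⁻¹ ^ 2 / 2) := by
    rw [← exp_add]; congr 1; field_simp; ring
  have hsqrt : √(2 * π) = 2 * √(π / 2) := by
    rw [show 2 * π = 2 ^ 2 * (π / 2) by ring, sqrt_mul (by norm_num), sqrt_sq zero_le_two]
  calc _ = 2 * √(π / 2) / √(2 * π) * (exp (b ^ 2 / 2) * exp (-(b⁻¹ * x + b) ^ 2 / 2)) *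
        (b / (b⁻¹ * x + b)) := by rw [stdPhi]; ring
    _ = _ := by
      rw [hexp, ← hsqrt, div_self (sqrt_ne_zero'.2 (by positivity)), hu, div_mul_cancel_left₀ hb]
      ring

lemma tendsto_nat_mul_two_mul_stdPhi_div {b : ℕ → ℝ}
    (hb : ∀ n : ℕ, 1 ≤ n → 0 < b n ∧ √(π / 2) * b n * exp (b n ^ 2 / 2) = n) (x : ℝ) :
    Tendsto (fun n : ℕ => n * (2 * (stdPhi ((b n)⁻¹ * x + b n) / ((b n)⁻¹ * x + b n))))
      atTop (𝓝 (exp (-x))) := by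
  have hr : Tendsto (fun n => (b n)⁻¹) atTop (𝓝 0) :=
    tendsto_inv_atTop_zero.comp (tendsto_atTop_of_sqrt_mul_exp_eq hb)
  have hcont : ContinuousAt (fun r => exp (-x - x ^ 2 * r ^ 2 / 2) / (1 + x * r ^ 2)) 0 := by
    fun_prop (disch := simp)
  refine (by simpa using hcont.tendsto.comp hr : Tendsto _ atTop (𝓝 (exp (-x)))).congr' ?_
  filter_upwards [eventually_ge_atTop 1] with n hn
  obtain ⟨hpos, heq⟩ := hb n hn
  rw [← heq, sqrt_mul_exp_mul_two_mul_stdPhi_div hpos.ne']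
  rfl

theorem stmt_8 (l : ℝ) (hl : 0 < l) (b : ℕ → ℝ)
    (hb : ∀ n : ℕ, 1 ≤ n → 0 < b n ∧
      Real.sqrt (Real.pi / 2) * b n * Real.exp ((b n) ^ 2 / 2) = n)
    (x : ℝ) :
    Tendsto (fun n : ℕ => (snCdf l ((b n)⁻¹ * x + b n)) ^ n) atTop
      (nhds (Real.exp (-Real.exp (-x)))) := by
  have hbtop := tendsto_atTop_of_sqrt_mul_exp_eq hb
  have hu : Tendsto (fun n => (b n)⁻¹ * x + b n) atTop atTop :=
    ((tendsto_inv_atTop_zero.comp hbtop).mul_const x).add_atTop hbtop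
  have htail : Tendsto (fun n : ℕ => n * snTail l ((b n)⁻¹ * x + b n)) atTop (𝓝 (exp (-x))) :=
    (IsEquivalent.refl.mul ((isEquivalent_snTail hl).comp_tendsto hu)).tendsto_nhds_iff.2
      (tendsto_nat_mul_two_mul_stdPhi_div hb x)
  have := tendsto_one_add_pow_exp_of_tendsto
    (g := fun n => -snTail l ((b n)⁻¹ * x + b n)) (by simpa only [mul_neg] using htail.neg)
  simpa [snCdf_eq_one_sub_snTail, sub_eq_add_neg] using this
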